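/- arXiv:2108.02717 — 3 statements merged into one kernel-verified Lean document; each statement's English description precedes it below -/
import Mathlib

section
/- In a finite-horizon MDP, for any deterministic policy π̂, if for every step h ∈ [H] and state s we have max_a Q^π̂_h(s,a) − Q^π̂_h(s, π̂_h(s)) ≤ ε_h(s), then V*_0 − V^π̂_0 ≤ ∑_{h=1}^H sup_π ∑_s w^π_h(s) ε_h(s), where the supremum is over all policies and w^π_h(s) is the probability of visiting state s at step h under policy π. -/
open Finset in
/-- A finite-horizon MDP with finite state and action spaces, horizon `H`
(steps indexed `0, …, H-1`), initial state distribution `P0`, transition kernels `P`,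
and mean rewards `r` in `[0,1]`. -/
structure MDP (S A : Type*) [Fintype S] [Fintype A] where
  H : ℕ
  P0 : S → ℝ
  P0_nonneg : ∀ s, 0 ≤ P0 s
  P0_sum : ∑ s, P0 s = 1
  P : ℕ → S → A → S → ℝ
  P_nonneg : ∀ h s a s', 0 ≤ P h s a s'
  P_sum : ∀ h s a, ∑ s', P h s a s' = 1
  r : ℕ → S → A → ℝ
  r_nonneg : ∀ h s a, 0 ≤ r h s a
  r_le_one : ∀ h s a, r h s a ≤ 1

/-- A (stochastic) policy: `π h s a` is the probability of playing `a` in state `s` at step `h`. -/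
def Policy (S A : Type*) : Type _ := ℕ → S → A → ℝ

/-- `π` is a genuine stochastic policy: nonnegative and summing to one over actions. -/
def IsPolicy {S A : Type*} [Fintype A] (π : Policy S A) : Prop :=
  (∀ h s a, 0 ≤ π h s a) ∧ ∀ h s, ∑ a, π h s a = 1

/-- The stochastic policy corresponding to a deterministic policy `d`. -/
noncomputable def detPolicy {S A : Type*} [DecidableEq A] (d : ℕ → S → A) : Policy S A :=
  fun h s a => if a = d h s then 1 else 0

variable {S A : Type*} [Fintype S] [Fintype A]

/-- Value function computed backwards: `Vaux M π k s` is the expected reward-to-go of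
policy `π` from state `s` when `k` steps remain (i.e. at step `H - k`). -/
noncomputable def Vaux (M : MDP S A) (π : Policy S A) : ℕ → S → ℝ
  | 0, _ => 0
  | (k+1), s =>
      ∑ a, π (M.H - (k+1)) s a *
        (M.r (M.H - (k+1)) s a + ∑ s', M.P (M.H - (k+1)) s a s' * Vaux M π k s')

/-- `Vfun M π h s = V^π_h(s)`, the value of policy `π` at state `s`, step `h`. -/
noncomputable def Vfun (M : MDP S A) (π : Policy S A) (h : ℕ) (s : S) : ℝ :=
  Vaux M π (M.H - h) s

/-- `Qfun M π h s a = Q^π_h(s,a)` via the Bellman equation. -/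
noncomputable def Qfun (M : MDP S A) (π : Policy S A) (h : ℕ) (s : S) (a : A) : ℝ :=
  M.r h s a + ∑ s', M.P h s a s' * Vfun M π (h+1) s'

/-- `visit M π h s = w^π_h(s) = Pr_π[s_h = s]`, the state visitation probability. -/
noncomputable def visit (M : MDP S A) (π : Policy S A) : ℕ → S → ℝ
  | 0, s => M.P0 s
  | (h+1), s => ∑ s', ∑ a, visit M π h s' * π h s' a * M.P h s' a s

/-- `visitSA M π h s a = w^π_h(s,a) = Pr_π[s_h = s, a_h = a]`. -/
noncomputable def visitSA (M : MDP S A) (π : Policy S A) (h : ℕ) (s : S) (a : A) : ℝ :=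
  visit M π h s * π h s a

/-- `Vstar M h s = V^*_h(s)`, the optimal value function. -/
noncomputable def Vstar (M : MDP S A) (h : ℕ) (s : S) : ℝ :=
  ⨆ π : {π : Policy S A // IsPolicy π}, Vfun M π.1 h s

/-- `Qstar M h s a = Q^*_h(s,a)`, the optimal Q-function. -/
noncomputable def Qstar (M : MDP S A) (h : ℕ) (s : S) (a : A) : ℝ :=
  M.r h s a + ∑ s', M.P h s a s' * Vstar M (h+1) s'

/-- `Wmax M h s = W_h(s) = sup_π Pr_π[s_h = s]`, the maximum reachability of `s` at step `h`. -/
noncomputable def Wmax (M : MDP S A) (h : ℕ) (s : S) : ℝ :=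
  ⨆ π : {π : Policy S A // IsPolicy π}, visit M π.1 h s

/-- `V0 M π = V^π_0`, the value of policy `π`. -/
noncomputable def V0 (M : MDP S A) (π : Policy S A) : ℝ :=
  ∑ s, M.P0 s * Vfun M π 0 s

/-- `Vstar0 M = V^*_0 = sup_π V^π_0`. -/
noncomputable def Vstar0 (M : MDP S A) : ℝ :=
  ⨆ π : {π : Policy S A // IsPolicy π}, V0 M π.1


section Aux

lemma isPolicy_detPolicy [DecidableEq A] (d : ℕ → S → A) : IsPolicy (detPolicy (A := A) d) := by
  constructor
  · intro h s a; unfold detPolicy; positivity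
  · intro h s; simp [detPolicy]

lemma visit_nonneg (M : MDP S A) {π : Policy S A} (hπ : IsPolicy π) :
    ∀ h s, 0 ≤ visit M π h s
  | 0, s => M.P0_nonneg s
  | (h+1), s => by
    rw [visit]
    apply Finset.sum_nonneg; intro s' _
    apply Finset.sum_nonneg; intro a _
    have := visit_nonneg M hπ h s'
    have := hπ.1 h s' a
    have := M.P_nonneg h s' a s
    positivity

lemma visit_sum (M : MDP S A) {π : Policy S A} (hπ : IsPolicy π) :
    ∀ h, ∑ s, visit M π h s = 1
  | 0 => by simpa [visit] using M.P0_sum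
  | (h+1) => by
    simp only [visit]
    calc ∑ s, ∑ s', ∑ a, visit M π h s' * π h s' a * M.P h s' a s
        = ∑ s', ∑ a, ∑ s, visit M π h s' * π h s' a * M.P h s' a s := by
          rw [Finset.sum_comm]
          exact Finset.sum_congr rfl fun s' _ => Finset.sum_comm
      _ = ∑ s', ∑ a, visit M π h s' * π h s' a := by
          refine Finset.sum_congr rfl fun s' _ => Finset.sum_congr rfl fun a _ => ?_
          rw [← Finset.mul_sum, M.P_sum, mul_one]
      _ = ∑ s', visit M π h s' := by
          refine Finset.sum_congr rfl fun s' _ => ?_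
          rw [← Finset.mul_sum, hπ.2, mul_one]
      _ = 1 := visit_sum M hπ h

lemma visit_le_one (M : MDP S A) {π : Policy S A} (hπ : IsPolicy π) (h : ℕ) (s : S) :
    visit M π h s ≤ 1 := by
  calc visit M π h s ≤ ∑ s', visit M π h s' :=
        Finset.single_le_sum (fun s' _ => visit_nonneg M hπ h s') (Finset.mem_univ s)
    _ = 1 := visit_sum M hπ h

lemma Vfun_H (M : MDP S A) (π : Policy S A) (s : S) : Vfun M π M.H s = 0 := by
  simp [Vfun, Nat.sub_self, Vaux]

lemma Vfun_bellman (M : MDP S A) (π : Policy S A) {h : ℕ} (hh : h < M.H) (s : S) :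
    Vfun M π h s
      = ∑ a, π h s a * (M.r h s a + ∑ s', M.P h s a s' * Vfun M π (h+1) s') := by
  obtain ⟨k, hk⟩ : ∃ k, M.H - h = k + 1 := ⟨M.H - h - 1, by omega⟩
  have h1 : M.H - (h+1) = k := by omega
  have h2 : M.H - (k+1) = h := by omega
  unfold Vfun
  rw [hk, h1, Vaux, h2]

lemma Vfun_det [DecidableEq A] (M : MDP S A) (d : ℕ → S → A) {h : ℕ} (hh : h < M.H) (s : S) :
    Vfun M (detPolicy d) h s = Qfun M (detPolicy d) h s (d h s) := by
  rw [Vfun_bellman M _ hh]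
  unfold Qfun detPolicy
  simp

/-- Key one-step identity for an arbitrary function `f` of the next state. -/
lemma step_eq (M : MDP S A) (π : Policy S A) (h : ℕ) (f : S → ℝ) :
    ∑ s, visit M π h s * ∑ a, π h s a * (M.r h s a + ∑ s', M.P h s a s' * f s')
      = (∑ s, visit M π h s * ∑ a, π h s a * M.r h s a)
        + ∑ s', visit M π (h+1) s' * f s' := by
  have expand : ∀ s, visit M π h s * ∑ a, π h s a * (M.r h s a + ∑ s', M.P h s a s' * f s')
      = visit M π h s * ∑ a, π h s a * M.r h s a
        + ∑ a, ∑ s', visit M π h s * π h s a * M.P h s a s' * f s' := by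
    intro s
    rw [Finset.mul_sum, Finset.mul_sum, ← Finset.sum_add_distrib]
    refine Finset.sum_congr rfl fun a _ => ?_
    have hps : ∑ s', visit M π h s * π h s a * M.P h s a s' * f s'
        = visit M π h s * (π h s a * ∑ s', M.P h s a s' * f s') := by
      simp only [Finset.mul_sum]
      exact Finset.sum_congr rfl fun s' _ => by ring
    rw [hps]; ring
  rw [Finset.sum_congr rfl fun s _ => expand s, Finset.sum_add_distrib]
  congr 1
  calc ∑ s, ∑ a, ∑ s', visit M π h s * π h s a * M.P h s a s' * f s'
      = ∑ s, ∑ s', ∑ a, visit M π h s * π h s a * M.P h s a s' * f s' :=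
        Finset.sum_congr rfl fun s _ => Finset.sum_comm
    _ = ∑ s', ∑ s, ∑ a, visit M π h s * π h s a * M.P h s a s' * f s' := Finset.sum_comm
    _ = ∑ s', visit M π (h+1) s' * f s' := by
        refine Finset.sum_congr rfl fun s' _ => ?_
        rw [visit, Finset.sum_mul]
        refine Finset.sum_congr rfl fun s _ => ?_
        rw [Finset.sum_mul]

end Aux

/-- Performance-difference bound: if the deterministic policy `d` is `ε h s`-suboptimal
w.r.t. its own `Q`-function at every state `s` and step `h < H`, then its global
suboptimality is bounded by `∑_h sup_π ∑_s w^π_h(s) ε_h(s)`. -/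
theorem local_to_global_subopt [Nonempty A] [DecidableEq A] (M : MDP S A)
    (d : ℕ → S → A) (ε : ℕ → S → ℝ) (hε : ∀ h s, 0 ≤ ε h s)
    (hgap : ∀ h, h < M.H → ∀ s,
      (⨆ a, Qfun M (detPolicy d) h s a) - Qfun M (detPolicy d) h s (d h s) ≤ ε h s) :
    Vstar0 M - V0 M (detPolicy d)
      ≤ ∑ h ∈ Finset.range M.H,
          ⨆ π : {π : Policy S A // IsPolicy π}, ∑ s, visit M π.1 h s * ε h s := by
  set πd := detPolicy (A := A) d with hπd
  have hπdP : IsPolicy πd := isPolicy_detPolicy d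
  haveI : Nonempty {π : Policy S A // IsPolicy π} := ⟨⟨πd, hπdP⟩⟩
  -- Q-value of d is within ε of its own max
  have hQ : ∀ h, h < M.H → ∀ s a, Qfun M πd h s a ≤ Vfun M πd h s + ε h s := by
    intro h hh s a
    have h1 : Qfun M πd h s a ≤ ⨆ a', Qfun M πd h s a' :=
      le_ciSup (Finite.bddAbove_range _) a
    have h2 := hgap h hh s
    rw [Vfun_det M d hh]
    linarith
  -- main per-policy bound
  have key : ∀ π : Policy S A, IsPolicy π →
      V0 M π ≤ V0 M πd + ∑ h ∈ Finset.range M.H, ∑ s, visit M π h s * ε h s := by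
    intro π hπ
    set G : ℕ → ℝ := fun h => ∑ s, visit M π h s * Vfun M π h s with hG
    set T : ℕ → ℝ := fun h => ∑ s, visit M π h s * Vfun M πd h s with hT
    set W : ℕ → ℝ := fun h => ∑ s, visit M π h s * ε h s with hW
    have stepG : ∀ h, h < M.H → G h = (∑ s, visit M π h s * ∑ a, π h s a * M.r h s a) + G (h+1) := by
      intro h hh
      show (∑ s, visit M π h s * Vfun M π h s)
          = (∑ s, visit M π h s * ∑ a, π h s a * M.r h s a)
            + ∑ s, visit M π (h+1) s * Vfun M π (h+1) s
      calc ∑ s, visit M π h s * Vfun M π h s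
          = ∑ s, visit M π h s *
              ∑ a, π h s a * (M.r h s a + ∑ s', M.P h s a s' * Vfun M π (h+1) s') :=
            Finset.sum_congr rfl fun s _ => by rw [Vfun_bellman M π hh s]
        _ = _ := step_eq M π h (Vfun M π (h+1))
    have stepT : ∀ h, h < M.H →
        (∑ s, visit M π h s * ∑ a, π h s a * M.r h s a) + T (h+1) ≤ T h + W h := by
      intro h hh
      have hE : (∑ s, visit M π h s * ∑ a, π h s a * M.r h s a)
            + ∑ s, visit M π (h+1) s * Vfun M πd (h+1) s
          = ∑ s, visit M π h s * ∑ a, π h s a * Qfun M πd h s a := by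
        rw [← step_eq M π h (Vfun M πd (h+1))]
        exact Finset.sum_congr rfl fun s _ => rfl
      show (∑ s, visit M π h s * ∑ a, π h s a * M.r h s a)
            + (∑ s, visit M π (h+1) s * Vfun M πd (h+1) s)
          ≤ (∑ s, visit M π h s * Vfun M πd h s) + ∑ s, visit M π h s * ε h s
      rw [hE]
      have hle : ∀ s, visit M π h s * ∑ a, π h s a * Qfun M πd h s a
          ≤ visit M π h s * (Vfun M πd h s + ε h s) := by
        intro s
        apply mul_le_mul_of_nonneg_left _ (visit_nonneg M hπ h s)
        calc ∑ a, π h s a * Qfun M πd h s a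
            ≤ ∑ a, π h s a * (Vfun M πd h s + ε h s) := by
              refine Finset.sum_le_sum fun a _ =>
                mul_le_mul_of_nonneg_left (hQ h hh s a) (hπ.1 h s a)
          _ = Vfun M πd h s + ε h s := by rw [← Finset.sum_mul, hπ.2, one_mul]
      calc ∑ s, visit M π h s * ∑ a, π h s a * Qfun M πd h s a
          ≤ ∑ s, visit M π h s * (Vfun M πd h s + ε h s) := Finset.sum_le_sum fun s _ => hle s
        _ = (∑ s, visit M π h s * Vfun M πd h s) + ∑ s, visit M π h s * ε h s := by
            rw [← Finset.sum_add_distrib]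
            exact Finset.sum_congr rfl fun s _ => by ring
    -- downward induction
    have main : ∀ n j, j + n = M.H → G j ≤ T j + ∑ h ∈ Finset.Ico j M.H, W h := by
      intro n
      induction n with
      | zero =>
        intro j hj
        obtain rfl : j = M.H := by omega
        have hG0 : G M.H = 0 := by
          show (∑ s, visit M π M.H s * Vfun M π M.H s) = 0
          simp [Vfun_H]
        have hT0 : T M.H = 0 := by
          show (∑ s, visit M π M.H s * Vfun M πd M.H s) = 0
          simp [Vfun_H]
        simp [hG0, hT0]
      | succ n ih =>
        intro j hj
        have hjH : j < M.H := by omega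
        have h1 := stepG j hjH
        have h2 := stepT j hjH
        have h3 := ih (j+1) (by omega)
        have h4 : ∑ h ∈ Finset.Ico j M.H, W h = W j + ∑ h ∈ Finset.Ico (j+1) M.H, W h :=
          Finset.sum_eq_sum_Ico_succ_bot hjH W
        rw [h1, h4]
        linarith
    have hV0π : V0 M π = G 0 := rfl
    have hV0d : V0 M πd = T 0 := rfl
    have := main M.H 0 (by omega)
    rw [Finset.range_eq_Ico]
    rw [hV0π, hV0d]
    exact this
  -- bound each W by the sup
  have Wsup : ∀ π : Policy S A, IsPolicy π → ∀ h,
      ∑ s, visit M π h s * ε h s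
        ≤ ⨆ π' : {π : Policy S A // IsPolicy π}, ∑ s, visit M π'.1 h s * ε h s := by
    intro π hπ h
    have hbdd : BddAbove (Set.range fun π' : {π : Policy S A // IsPolicy π} =>
        ∑ s, visit M π'.1 h s * ε h s) := by
      refine ⟨∑ s, ε h s, ?_⟩
      rintro x ⟨π', rfl⟩
      refine Finset.sum_le_sum fun s _ => ?_
      calc visit M π'.1 h s * ε h s ≤ 1 * ε h s :=
            mul_le_mul_of_nonneg_right (visit_le_one M π'.2 h s) (hε h s)
        _ = ε h s := one_mul _
    exact le_ciSup hbdd ⟨π, hπ⟩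
  -- conclude
  rw [sub_le_iff_le_add]
  rw [Vstar0]
  apply ciSup_le
  rintro ⟨π, hπ⟩
  calc V0 M π ≤ V0 M πd + ∑ h ∈ Finset.range M.H, ∑ s, visit M π h s * ε h s := key π hπ
    _ ≤ V0 M πd + ∑ h ∈ Finset.range M.H,
          ⨆ π' : {π : Policy S A // IsPolicy π}, ∑ s, visit M π'.1 h s * ε h s := by
        gcongr with h hh
        exact Wsup π hπ h
    _ = _ := by rw [add_comm]
end

section
/- For a multi-armed bandit instance (H = 1, single state), the gap-visitation complexity satisfies C(M, ε) = ∑_a min{1/Δ̃(a)², 1/ε²} (up to the second OPT term with H=1 and single state being absorbed), and when the optimal arm is unique, C*(M) = ∑_{a : Δ(a)>0} 1/Δ(a)². Concretely: inf over probability distributions π on arms of max_a min{1/(π(a)Δ̃(a)²), 1/(π(a)ε²)} = ∑_a min{1/Δ̃(a)², 1/ε²}, and inf over distributions π of max_{a} 1/(π(a) Δ(a)²) (max over a with Δ(a)>0, π supported so that values are finite) = ∑_{a : Δ(a)>0} 1/Δ(a)². -/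
open scoped ENNReal Classical

variable {A : Type*} [Fintype A] [Nonempty A]

/-- The suboptimality gap of arm `a`: `Δ(a) = max_{a'} μ(a') - μ(a)`. -/
noncomputable def gap (μ : A → ℝ) (a : A) : ℝ := (⨆ a', μ a') - μ a

/-- The effective gap `Δ̃(a)`: equal to `Δ(a)` for suboptimal arms; equal to the minimum
nonzero gap for a unique optimal arm; and `0` for non-unique optimal arms. -/
noncomputable def egap (μ : A → ℝ) (a : A) : ℝ :=
  if 0 < gap μ a then gap μ a
  else if ∀ a', gap μ a' = 0 → a' = a then ⨅ a' : {a' // 0 < gap μ a'}, gap μ a'.1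
  else 0

/-!
Both parts are instances of one identity: for weights `c : ι → ℝ≥0∞` on a finite set,
`inf_π max_a c(a)/π(a) = ∑_a c(a)` over probability vectors `π`. The lower bound is
`∑ c ≤ ∑ π(a) · max_b c(b)/π(b) = max_b c(b)/π(b)`, and `π = c / ∑ c` attains it.
In the first part `c(a) = min{1/Δ̃(a)², 1/ε²}`, in the second `c(a) = 1/Δ(a)²` on suboptimal
arms and `0` on the optimal one.
-/

namespace ENNReal

section Allocation

variable {ι : Type*} [Fintype ι]

lemma ne_top_of_sum_eq_one {π : ι → ℝ≥0∞} (hπ : ∑ a, π a = 1) (a : ι) : π a ≠ ∞ :=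
  ne_top_of_le_ne_top one_ne_top <|
    hπ ▸ Finset.single_le_sum (fun _ _ => zero_le) (Finset.mem_univ a)

lemma sum_le_iSup_div_of_sum_eq_one (c : ι → ℝ≥0∞) {π : ι → ℝ≥0∞} (hπ : ∑ a, π a = 1) :
    ∑ a, c a ≤ ⨆ a, c a / π a := by
  set s := ⨆ a, c a / π a
  rcases eq_or_ne s ∞ with hs | hs
  · exact hs ▸ le_top
  have hc (a : ι) : c a ≤ s * π a :=
    (ENNReal.div_le_iff_le_mul (Or.inr hs) (Or.inl (ne_top_of_sum_eq_one hπ a))).mp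
      (le_iSup (fun b => c b / π b) a)
  calc ∑ a, c a ≤ ∑ a, s * π a := Finset.sum_le_sum fun a _ => hc a
    _ = s := by rw [← Finset.mul_sum, hπ, mul_one]

lemma iInf_iSup_div_le_sum [Nonempty ι] (c : ι → ℝ≥0∞) :
    ⨅ (π : ι → ℝ≥0∞) (_ : ∑ a, π a = 1), ⨆ a, c a / π a ≤ ∑ a, c a := by
  set S := ∑ a, c a
  rcases eq_or_ne S ∞ with hS | hS
  · exact hS ▸ le_top
  rcases eq_or_ne S 0 with h0 | h0
  · have hc : ∀ a, c a = 0 := fun a => Finset.sum_eq_zero_iff.mp h0 a (Finset.mem_univ a)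
    obtain ⟨a₀⟩ := ‹Nonempty ι›
    exact iInf₂_le_of_le (Pi.single a₀ 1) (by simp) (by simp [hc])
  refine iInf₂_le_of_le (fun a => c a / S) ?_ (iSup_le fun a => div_le_of_le_mul ?_)
  · simp only [div_eq_mul_inv, ← Finset.sum_mul]
    exact ENNReal.mul_inv_cancel h0 hS
  · rw [ENNReal.mul_div_cancel h0 hS]

theorem iInf_iSup_div_eq_sum [Nonempty ι] (c : ι → ℝ≥0∞) :
    ⨅ (π : ι → ℝ≥0∞) (_ : ∑ a, π a = 1), ⨆ a, c a / π a = ∑ a, c a :=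
  (iInf_iSup_div_le_sum c).antisymm
    (le_iInf₂ fun _ hπ => sum_le_iSup_div_of_sum_eq_one c hπ)

end Allocation

lemma one_div_mul_eq_div {p x : ℝ≥0∞} (hp : p ≠ ∞) (hx : x ≠ ∞) : 1 / (p * x) = 1 / x / p := by
  rw [one_div, ENNReal.mul_inv (Or.inr hx) (Or.inl hp), mul_comm, ← div_eq_mul_inv, one_div]

lemma min_div_right (a b p : ℝ≥0∞) : min (a / p) (b / p) = min a b / p :=
  (Monotone.map_min fun _ _ h => ENNReal.div_le_div_right h p).symm

end ENNReal

lemma iSup_subtype_eq_iSup_ite {ι α : Type*} [CompleteLattice α] (P : ι → Prop) (f : ι → α) :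
    ⨆ a : {a // P a}, f a = ⨆ a, if P a then f a else ⊥ := by
  simp only [iSup_subtype, iSup_eq_if]

theorem bandit_gap_visitation_complexity_general (μ : A → ℝ) (ε : ℝ) :
    (⨅ (π : A → ℝ≥0∞) (_ : ∑ a, π a = 1), ⨆ a,
        min (1 / (π a * ENNReal.ofReal (egap μ a) ^ 2))
            (1 / (π a * ENNReal.ofReal ε ^ 2)))
      = ∑ a, min (1 / ENNReal.ofReal (egap μ a) ^ 2) (1 / ENNReal.ofReal ε ^ 2) ∧
    ((∃! a, gap μ a = 0) →
      (⨅ (π : A → ℝ≥0∞) (_ : ∑ a, π a = 1), ⨆ a : {a // 0 < gap μ a},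
          1 / (π a.1 * ENNReal.ofReal (gap μ a.1) ^ 2))
        = ∑ a, if 0 < gap μ a then 1 / ENNReal.ofReal (gap μ a) ^ 2 else 0) := by
  have hsq (x : ℝ) : ENNReal.ofReal x ^ 2 ≠ ∞ := ENNReal.pow_ne_top ENNReal.ofReal_ne_top
  refine ⟨?_, fun _ => ?_⟩
  · rw [← ENNReal.iInf_iSup_div_eq_sum]
    refine iInf_congr fun π => iInf_congr fun hπ => iSup_congr fun a => ?_
    have hπa := ENNReal.ne_top_of_sum_eq_one hπ a
    rw [ENNReal.one_div_mul_eq_div hπa (hsq _), ENNReal.one_div_mul_eq_div hπa (hsq _),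
      ENNReal.min_div_right]
  · rw [← ENNReal.iInf_iSup_div_eq_sum]
    refine iInf_congr fun π => iInf_congr fun hπ => ?_
    refine (iSup_subtype_eq_iSup_ite _ fun a => 1 / (π a * ENNReal.ofReal (gap μ a) ^ 2)).trans
      (iSup_congr fun a => ?_)
    split_ifs
    · exact ENNReal.one_div_mul_eq_div (ENNReal.ne_top_of_sum_eq_one hπ a) (hsq _)
    · rw [bot_eq_zero, ENNReal.zero_div]

/-- Gap-visitation complexity of a multi-armed bandit (`H = 1`, a single state):
`inf_π max_a min{1/(π(a)Δ̃(a)²), 1/(π(a)ε²)} = ∑_a min{1/Δ̃(a)², 1/ε²}`, and when the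
optimal arm is unique,
`inf_π max_{a : Δ(a) > 0} 1/(π(a)Δ(a)²) = ∑_{a : Δ(a) > 0} 1/Δ(a)²`.
All divisions are in `ℝ≥0∞`, so `x/0 = ∞` for `x > 0` and `min{∞, c} = c`. -/
theorem bandit_gap_visitation_complexity (μ : A → ℝ) (ε : ℝ) (hε : 0 < ε) :
    (⨅ (π : A → ℝ≥0∞) (_ : ∑ a, π a = 1), ⨆ a,
        min (1 / (π a * ENNReal.ofReal (egap μ a) ^ 2))
            (1 / (π a * ENNReal.ofReal ε ^ 2)))
      = ∑ a, min (1 / ENNReal.ofReal (egap μ a) ^ 2) (1 / ENNReal.ofReal ε ^ 2) ∧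
    ((∃! a, gap μ a = 0) →
      (⨅ (π : A → ℝ≥0∞) (_ : ∑ a, π a = 1), ⨆ a : {a // 0 < gap μ a},
          1 / (π a.1 * ENNReal.ofReal (gap μ a.1) ^ 2))
        = ∑ a, if 0 < gap μ a then 1 / ENNReal.ofReal (gap μ a) ^ 2 else 0) :=
  bandit_gap_visitation_complexity_general μ ε
end

section
/- In a finite-horizon MDP, for every h: inf_π max_{s,a} min{1/(w^π_h(s,a) Δ̃_h(s,a)²), W_h(s)²/(w^π_h(s,a) ε²)} = inf_π max_s (1/w^π_h(s)) ∑_a min{1/Δ̃_h(s,a)², W_h(s)²/ε²}, where the infimum is over all stochastic policies, w^π_h(s,a) = π_h(a|s)·w^π_h(s), and w^π_h(s) depends only on the policy's actions at steps before h. -/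
open scoped ENNReal Classical

variable {S A : Type*} [Fintype S] [Fintype A]

/-! Writing `c(s,a) = min{1/Δ̃², W(s)²/ε²}`, both arguments of the minimum are finite multiples of
`1/w^π_h(s,a)`, so the objective at `s` is `(1/w^π_h(s)) · max_a c(s,a)/π_h(a|s)`. For every
distribution `λ` on actions, `∑_a c(s,a) ≤ max_a c(s,a)/λ(a)`, with equality for `λ ∝ c(s,·)`.
Since `w^π_h` depends only on `π_0, …, π_{h-1}`, the step-`h` rule of any policy can be replaced by
this proportional one without changing `w^π_h`. -/

namespace ENNReal

theorem min_one_div_mul_div_mul {X G Q E : ℝ≥0∞} (hX : X ≠ ⊤) (hG : G ≠ ⊤) (hE : E ≠ ⊤) :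
    min (1 / (X * G)) (Q / (X * E)) = X⁻¹ * min (1 / G) (Q / E) := by
  rw [mul_min_of_nonneg _ _ zero_le, one_div, one_div, div_eq_mul_inv, div_eq_mul_inv,
    ENNReal.mul_inv (.inr hG) (.inl hX), ENNReal.mul_inv (.inr hE) (.inl hX)]
  ring_nf

theorem min_one_div_ofReal_mul_div_ofReal_mul {w p : ℝ} (hp : 0 ≤ p) {G E : ℝ≥0∞} (hG : G ≠ ⊤)
    (hE : E ≠ ⊤) (Q : ℝ≥0∞) :
    min (1 / (ENNReal.ofReal (w * p) * G)) (Q / (ENNReal.ofReal (w * p) * E))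
      = 1 / ENNReal.ofReal w * (min (1 / G) (Q / E) / ENNReal.ofReal p) := by
  rw [ofReal_mul' hp, min_one_div_mul_div_mul (mul_ne_top ofReal_ne_top ofReal_ne_top) hG hE,
    ENNReal.mul_inv (.inr ofReal_ne_top) (.inl ofReal_ne_top), mul_assoc,
    ← one_div (ENNReal.ofReal w), ENNReal.div_eq_inv_mul (a := min _ _)]

variable {ι : Type*} [Fintype ι]

theorem sum_le_iSup_div_ofReal (c : ι → ℝ≥0∞) {p : ι → ℝ} (hp : p ∈ stdSimplex ℝ ι) :
    ∑ i, c i ≤ ⨆ i, c i / ENNReal.ofReal (p i) := by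
  set m := ⨆ i, c i / ENNReal.ofReal (p i)
  rcases eq_or_ne m ⊤ with hm | hm
  · exact hm ▸ le_top
  have hle : ∀ i, c i ≤ m * ENNReal.ofReal (p i) := fun i =>
    (ENNReal.div_le_iff_le_mul (.inr hm) (.inl ofReal_ne_top)).1 (le_iSup (fun i => c i / _) i)
  calc ∑ i, c i ≤ ∑ i, m * ENNReal.ofReal (p i) := Finset.sum_le_sum fun i _ => hle i
    _ = m := by
      rw [← Finset.mul_sum, ← ofReal_sum_of_nonneg fun i _ => hp.1 i, hp.2, ofReal_one, mul_one]

theorem exists_mem_stdSimplex_div_ofReal_le (c : ι → ℝ≥0∞) (hne : (stdSimplex ℝ ι).Nonempty) :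
    ∃ p ∈ stdSimplex ℝ ι, ∀ i, c i / ENNReal.ofReal (p i) ≤ ∑ j, c j := by
  set T := ∑ j, c j
  obtain ⟨q, hq⟩ := hne
  rcases eq_or_ne T ⊤ with hT | hT
  · exact ⟨q, hq, fun i => hT ▸ le_top⟩
  rcases eq_or_ne T 0 with hT0 | hT0
  · refine ⟨q, hq, fun i => ?_⟩
    rw [Finset.sum_eq_zero_iff.1 hT0 i (Finset.mem_univ i), ENNReal.zero_div]
    exact zero_le
  have hc : ∀ i, c i ≠ ⊤ := fun i =>
    ne_top_of_le_ne_top hT (Finset.single_le_sum (fun j _ => zero_le) (Finset.mem_univ i))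
  refine ⟨fun i => (c i / T).toReal, ⟨fun i => toReal_nonneg, ?_⟩, fun i => ?_⟩
  · rw [← toReal_sum fun i _ => div_ne_top (hc i) hT0]
    simp only [div_eq_mul_inv, ← Finset.sum_mul]
    rw [ENNReal.mul_inv_cancel hT0 hT, toReal_one]
  · rw [ofReal_toReal (div_ne_top (hc i) hT0), ENNReal.div_le_iff_le_mul (.inr hT) (.inr hT0),
      ENNReal.mul_div_cancel hT0 hT]

end ENNReal

omit [Fintype S] in
theorem isPolicy_iff_forall_mem_stdSimplex {π : Policy S A} :
    IsPolicy π ↔ ∀ h s, π h s ∈ stdSimplex ℝ A :=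
  ⟨fun hπ h s => ⟨hπ.1 h s, hπ.2 h s⟩, fun hπ => ⟨fun h s => (hπ h s).1, fun h s => (hπ h s).2⟩⟩

theorem visit_congr (M : MDP S A) {π π' : Policy S A} {h : ℕ} (hπ : ∀ k < h, π k = π' k) :
    visit M π h = visit M π' h := by
  induction h with
  | zero => rfl
  | succ n ih =>
    funext s
    simp only [visit]
    rw [ih fun k hk => hπ k (Nat.lt_succ_of_lt hk), hπ n (Nat.lt_succ_self n)]

theorem IsPolicy.exists_apply_eq_visit_eq (M : MDP S A) {π : Policy S A} (hπ : IsPolicy π)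
    (h : ℕ) {σ : S → A → ℝ} (hσ : ∀ s, σ s ∈ stdSimplex ℝ A) :
    ∃ π' : Policy S A, IsPolicy π' ∧ visit M π' h = visit M π h ∧ π' h = σ := by
  refine ⟨fun k => if k = h then σ else π k, isPolicy_iff_forall_mem_stdSimplex.2 fun k s => ?_,
    visit_congr M fun k hk => if_neg hk.ne, if_pos rfl⟩
  by_cases hk : k = h
  · simpa [hk] using hσ s
  · simpa [hk] using isPolicy_iff_forall_mem_stdSimplex.1 hπ k s

theorem gap_visitation_inner_sum_general (M : MDP S A) (h : ℕ) (g : S → A → ℝ) (W : S → ℝ) (ε : ℝ) :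
    (⨅ π : {π : Policy S A // IsPolicy π}, ⨆ s, ⨆ a,
        min (1 / (ENNReal.ofReal (visitSA M π.1 h s a) * ENNReal.ofReal (g s a) ^ 2))
            (ENNReal.ofReal (W s) ^ 2 /
              (ENNReal.ofReal (visitSA M π.1 h s a) * ENNReal.ofReal ε ^ 2)))
      = ⨅ π : {π : Policy S A // IsPolicy π}, ⨆ s,
          (1 / ENNReal.ofReal (visit M π.1 h s)) *
            ∑ a, min (1 / ENNReal.ofReal (g s a) ^ 2)
                     (ENNReal.ofReal (W s) ^ 2 / ENNReal.ofReal ε ^ 2) := by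
  set C : S → A → ℝ≥0∞ := fun s a =>
    min (1 / ENNReal.ofReal (g s a) ^ 2) (ENNReal.ofReal (W s) ^ 2 / ENNReal.ofReal ε ^ 2)
  have hterm : ∀ π : {π : Policy S A // IsPolicy π},
      (⨆ s, ⨆ a, min (1 / (ENNReal.ofReal (visitSA M π.1 h s a) * ENNReal.ofReal (g s a) ^ 2))
        (ENNReal.ofReal (W s) ^ 2 / (ENNReal.ofReal (visitSA M π.1 h s a) * ENNReal.ofReal ε ^ 2)))
      = ⨆ s, 1 / ENNReal.ofReal (visit M π.1 h s) * ⨆ a, C s a / ENNReal.ofReal (π.1 h s a) :=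
    fun π => iSup_congr fun s => by
      rw [ENNReal.mul_iSup]
      exact iSup_congr fun a => ENNReal.min_one_div_ofReal_mul_div_ofReal_mul (π.2.1 h s a)
        (ENNReal.pow_ne_top ENNReal.ofReal_ne_top) (ENNReal.pow_ne_top ENNReal.ofReal_ne_top) _
  refine (iInf_congr hterm).trans
    (le_antisymm (le_iInf fun π => ?_) (le_iInf fun π => (iInf_le _ π).trans ?_))
  · choose σ hσ hσC using fun s =>
      ENNReal.exists_mem_stdSimplex_div_ofReal_le (C s)
        ⟨_, isPolicy_iff_forall_mem_stdSimplex.1 π.2 h s⟩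
    obtain ⟨π', hπ', hvisit, rfl⟩ := π.2.exists_apply_eq_visit_eq M h hσ
    refine (iInf_le _ ⟨π', hπ'⟩).trans (iSup_mono fun s => ?_)
    rw [hvisit]
    exact mul_le_mul_right (iSup_le (hσC s)) _
  · exact iSup_mono fun s => mul_le_mul_right
      (ENNReal.sum_le_iSup_div_ofReal _ (isPolicy_iff_forall_mem_stdSimplex.1 π.2 h s)) _

/-- The inner maximum over actions in the gap-visitation complexity reduces to a sum:
`inf_π max_{s,a} min{1/(w^π_h(s,a)Δ̃²), W(s)²/(w^π_h(s,a)ε²)}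
  = inf_π max_s (1/w^π_h(s)) ∑_a min{1/Δ̃², W(s)²/ε²}`,
where `w^π_h(s,a) = π_h(a|s) w^π_h(s)`. Divisions are in `ℝ≥0∞`. -/
theorem gap_visitation_inner_sum [Nonempty A] (M : MDP S A) (h : ℕ)
    (g : S → A → ℝ) (hg : ∀ s a, 0 ≤ g s a)
    (W : S → ℝ) (hW : ∀ s, 0 ≤ W s) (ε : ℝ) (hε : 0 < ε) :
    (⨅ π : {π : Policy S A // IsPolicy π}, ⨆ s, ⨆ a,
        min (1 / (ENNReal.ofReal (visitSA M π.1 h s a) * ENNReal.ofReal (g s a) ^ 2))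
            (ENNReal.ofReal (W s) ^ 2 /
              (ENNReal.ofReal (visitSA M π.1 h s a) * ENNReal.ofReal ε ^ 2)))
      = ⨅ π : {π : Policy S A // IsPolicy π}, ⨆ s,
          (1 / ENNReal.ofReal (visit M π.1 h s)) *
            ∑ a, min (1 / ENNReal.ofReal (g s a) ^ 2)
                     (ENNReal.ofReal (W s) ^ 2 / ENNReal.ofReal ε ^ 2) :=
  gap_visitation_inner_sum_general M h g W ε
end
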